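/- Let C be a class of frames that is robust with respect to reflexivity (closed under taking reflexive closures). If a modal formula φ (in the □-language) is valid on C under the standard Kripke semantics, then its translation φ∘ is valid on C under the reflexive-insensitive semantics. -/
import Mathlib


/-- Formulas of the language L∘. -/
inductive RIForm : Type where
  | var : Nat → RIForm
  | neg : RIForm → RIForm
  | and : RIForm → RIForm → RIForm
  | circ : RIForm → RIForm
deriving DecidableEq

def RIForm.imp (φ ψ : RIForm) : RIForm := .neg (.and φ (.neg ψ))
def RIForm.or (φ ψ : RIForm) : RIForm := .neg (.and (.neg φ) (.neg ψ))
def RIForm.top : RIForm := .neg (.and (.var 0) (.neg (.var 0)))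
def RIForm.bot : RIForm := .and (.var 0) (.neg (.var 0))
def RIForm.iff (φ ψ : RIForm) : RIForm := .and (φ.imp ψ) (ψ.imp φ)

/-- Reflexive-insensitive satisfaction. -/
def riSat {W : Type} (R : W → W → Prop) (V : Nat → W → Prop) : W → RIForm → Prop
  | w, .var p => V p w
  | w, .neg φ => ¬ riSat R V w φ
  | w, .and φ ψ => riSat R V w φ ∧ riSat R V w ψ
  | w, .circ φ => ¬ riSat R V w φ ∨ ∀ x, R w x → riSat R V x φ

/-- Validity on a frame under the reflexive-insensitive semantics. -/
def riValid {W : Type} (R : W → W → Prop) (φ : RIForm) : Prop :=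
  ∀ V w, riSat R V w φ

/-- Formulas of the basic modal language with □. -/
inductive MForm : Type where
  | var : Nat → MForm
  | neg : MForm → MForm
  | and : MForm → MForm → MForm
  | box : MForm → MForm
deriving DecidableEq

def MForm.imp (φ ψ : MForm) : MForm := .neg (.and φ (.neg ψ))
def MForm.diam (φ : MForm) : MForm := .neg (.box (.neg φ))

/-- Standard Kripke satisfaction. -/
def msat {W : Type} (R : W → W → Prop) (V : Nat → W → Prop) : W → MForm → Prop
  | w, .var p => V p w
  | w, .neg φ => ¬ msat R V w φ
  | w, .and φ ψ => msat R V w φ ∧ msat R V w ψ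
  | w, .box φ => ∀ x, R w x → msat R V x φ

/-- The ∘-translation: (□φ)∘ = ∘(φ∘) ∧ φ∘. -/
def MForm.trans : MForm → RIForm
  | .var p => .var p
  | .neg φ => .neg φ.trans
  | .and φ ψ => .and φ.trans ψ.trans
  | .box φ => .and (.circ φ.trans) φ.trans


lemma trans_sat {W : Type} (R : W → W → Prop) (V : Nat → W → Prop) :
    ∀ (φ : MForm) (w : W),
      riSat R V w φ.trans ↔ msat (fun x y => R x y ∨ x = y) V w φ := by
  intro φ
  induction φ with
  | var p => intro w; simp [MForm.trans, riSat, msat]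
  | neg ψ ih => intro w; simp [MForm.trans, riSat, msat, ih]
  | and ψ χ ih1 ih2 => intro w; simp [MForm.trans, riSat, msat, ih1, ih2]
  | box ψ ih =>
    intro w
    simp only [MForm.trans, riSat, msat]
    constructor
    · rintro ⟨h1 | h1, h2⟩
      · exact absurd h2 h1
      · rintro x (hx | rfl)
        · exact (ih x).mp (h1 x hx)
        · exact (ih w).mp h2
    · intro h
      refine ⟨Or.inr fun x hx => (ih x).mpr (h x (Or.inl hx)),
        (ih w).mpr (h w (Or.inr rfl))⟩

theorem robust_soundness
    (C : (W : Type) → (W → W → Prop) → Prop)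
    (hrobust : ∀ (W : Type) (R : W → W → Prop),
      C W R → C W (fun x y => R x y ∨ x = y))
    (φ : MForm)
    (hvalid : ∀ (W : Type) (R : W → W → Prop), C W R →
      ∀ (V : Nat → W → Prop) (w : W), msat R V w φ) :
    ∀ (W : Type) (R : W → W → Prop), C W R → riValid R φ.trans := by
  intro W R hC V w
  exact (trans_sat R V φ w).mpr (hvalid W _ (hrobust W R hC) V w)
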